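/- Suppose there is a sequence of Newman polynomials p_n with deg p_n → ∞, ‖p_n‖_1 ≥ c₀ deg p_n for some c₀ > 0, and R(p_n) ≤ ρ / deg p_n. Then for every ρ' > ρ there exists a sequence of Newman polynomials q_n with deg q_n → ∞, ‖q_n‖_1 = o(deg q_n), and R(q_n) ≤ ρ' / deg q_n. -/

import Mathlib

open Polynomial Filter

/-- A Newman polynomial has every coefficient equal to 0 or 1. -/
def IsNewman (p : Polynomial ℝ) : Prop := ∀ k, p.coeff k = 0 ∨ p.coeff k = 1

/-- The maximum coefficient of a polynomial. -/
noncomputable def maxCoeff (p : Polynomial ℝ) : ℝ := ⨆ k : ℕ, p.coeff k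

/-- The sum of the coefficients of a polynomial. -/
noncomputable def coeffSum (p : Polynomial ℝ) : ℝ :=
  ∑ j ∈ Finset.range (p.natDegree + 1), p.coeff j

/-- `R(f) = ‖f²‖_∞ / ‖f‖₁²`. -/
noncomputable def Rquot (f : Polynomial ℝ) : ℝ := maxCoeff (f ^ 2) / (coeffSum f) ^ 2

/-!
One Newman polynomial `f` of large degree `d` with `d · R(f) ≤ ρ` suffices. Call `B ⊆ [0, M)` flat
modulo `M` if every residue class is hit by at most `E · #B² / M` ordered pairs of `B`. Then
`g(X) f(X ^ M)` with `g = ∑_{b ∈ B} X ^ b` is again a Newman polynomial (its exponents are the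
`b + M c`), its degree lies in `[M d, M (d + 1))`, its coefficient sum is `#B · f(1)` and its
squared coefficients are at most `E · #B² / M · ‖f²‖_∞`. So `deg · R` grows at most by the
factor `E (d + 1) / d`, while the density is multiplied by `#B / M`.

Flat sets of density at most `2⁻ⁿ` with `E` arbitrarily close to `1` come from iterating
`B ↦ B + M · Q_p`, where `Q_p` is the set of quadratic residues modulo a large prime
`p ≡ 3 (mod 4)`: flatness constants multiply, and the Jacobi sum `J(χ, χ) = -χ(-1) = 1` shows
that each residue class modulo `p` is hit by at most `(p + 1) / 4` pairs of `Q_p`, against an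
average `#Q_p² / p` close to `p / 4`.
-/

open Finset

noncomputable def newmanPoly (A : Finset ℕ) : ℝ[X] := ∑ a ∈ A, X ^ a

/-- With `M = 0` this counts the representations `r = a + b` with `a, b ∈ A`. -/
def reprCount (M : ℕ) (A : Finset ℕ) (r : ℕ) : ℕ :=
  #{q ∈ A ×ˢ A | q.1 + q.2 ≡ r [MOD M]}

lemma reprCount_le_card_sq (M : ℕ) (A : Finset ℕ) (r : ℕ) : reprCount M A r ≤ #A ^ 2 :=
  (card_filter_le _ _).trans (by rw [card_product, sq])

lemma coeff_newmanPoly (A : Finset ℕ) (n : ℕ) :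
    (newmanPoly A).coeff n = if n ∈ A then 1 else 0 := by
  simp [newmanPoly, coeff_X_pow]

lemma isNewman_newmanPoly (A : Finset ℕ) : IsNewman (newmanPoly A) := by
  intro k
  rw [coeff_newmanPoly]
  split_ifs <;> simp

lemma IsNewman.eq_newmanPoly_support {f : ℝ[X]} (hf : IsNewman f) :
    f = newmanPoly f.support := by
  ext k
  simp only [coeff_newmanPoly, mem_support_iff]
  rcases hf k with h | h <;> simp [h]

lemma natDegree_newmanPoly {A : Finset ℕ} (hA : A.Nonempty) :
    (newmanPoly A).natDegree = A.max' hA := by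
  have hsupp : (newmanPoly A).support = A := by
    ext n
    rw [mem_support_iff, coeff_newmanPoly]
    split_ifs <;> simp_all
  rw [natDegree_eq_support_max' (by simpa [← support_eq_empty, hsupp] using hA.ne_empty)]
  simp_rw [hsupp]

lemma coeffSum_eq_eval_one (f : ℝ[X]) : coeffSum f = f.eval 1 := by
  simp [coeffSum, eval_eq_sum_range]

lemma coeffSum_newmanPoly (A : Finset ℕ) : coeffSum (newmanPoly A) = #A := by
  simp [coeffSum_eq_eval_one, newmanPoly, eval_finsetSum]

lemma IsNewman.coeffSum_nonneg {f : ℝ[X]} (hf : IsNewman f) : 0 ≤ coeffSum f := by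
  rw [hf.eq_newmanPoly_support, coeffSum_newmanPoly]
  positivity

lemma coeff_newmanPoly_sq (A : Finset ℕ) (n : ℕ) :
    (newmanPoly A ^ 2).coeff n = reprCount 0 A n := by
  simp only [sq, newmanPoly, sum_mul_sum, ← pow_add, finsetSum_coeff, coeff_X_pow,
    reprCount, Nat.modEq_zero_iff, card_filter, sum_product]
  push_cast
  simp_rw [eq_comm]

lemma bddAbove_range_coeff (f : ℝ[X]) : BddAbove (Set.range f.coeff) := by
  refine ((range (f.natDegree + 2)).image f.coeff).finite_toSet.subset ?_ |>.bddAbove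
  rintro _ ⟨k, rfl⟩
  by_cases hk : k ≤ f.natDegree
  · exact mem_image_of_mem _ (mem_range.2 (by omega))
  · rw [coeff_eq_zero_of_natDegree_lt (by omega),
      ← coeff_eq_zero_of_natDegree_lt (Nat.lt_succ_self _)]
    exact mem_image_of_mem _ (mem_range.2 (by omega))

lemma coeff_le_maxCoeff (f : ℝ[X]) (n : ℕ) : f.coeff n ≤ maxCoeff f :=
  le_ciSup (bddAbove_range_coeff f) n

lemma maxCoeff_nonneg (f : ℝ[X]) : 0 ≤ maxCoeff f := by
  simpa using coeff_le_maxCoeff f (f.natDegree + 1)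

/-- `B + M • C`. -/
def addScaled (B : Finset ℕ) (M : ℕ) (C : Finset ℕ) : Finset ℕ :=
  (B ×ˢ C).image fun q => q.1 + M * q.2

section addScaled

variable {B C : Finset ℕ} {M : ℕ}

lemma mem_addScaled {a : ℕ} :
    a ∈ addScaled B M C ↔ ∃ b ∈ B, ∃ c ∈ C, b + M * c = a := by
  simp [addScaled, and_assoc]

variable (hB : ∀ b ∈ B, b < M)
include hB

lemma mod_mem_and_div_mem_of_mem_addScaled {a : ℕ} (ha : a ∈ addScaled B M C) :
    a % M ∈ B ∧ a / M ∈ C := by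
  obtain ⟨b, hb, c, hc, rfl⟩ := mem_addScaled.1 ha
  have hbM := hB b hb
  rw [Nat.add_mul_mod_self_left, Nat.mod_eq_of_lt hbM, Nat.add_mul_div_left _ _ (by omega),
    Nat.div_eq_of_lt hbM, zero_add]
  exact ⟨hb, hc⟩

lemma lt_of_mem_addScaled {N : ℕ} (hC : ∀ c ∈ C, c < N) {a : ℕ}
    (ha : a ∈ addScaled B M C) : a < M * N := by
  obtain ⟨b, hb, c, hc, rfl⟩ := mem_addScaled.1 ha
  calc b + M * c < M * (c + 1) := by linarith [hB b hb]
    _ ≤ M * N := Nat.mul_le_mul_left M (hC c hc)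

lemma card_addScaled : #(addScaled B M C) = #B * #C := by
  rw [addScaled, card_image_of_injOn, card_product]
  rintro ⟨b, c⟩ h ⟨b', c'⟩ h' (heq : b + M * c = b' + M * c')
  simp only [coe_product, Set.mem_prod, mem_coe] at h h'
  have hbM := hB b h.1
  have hb'M := hB b' h'.1
  have hbb' : b = b' := by
    simpa [Nat.add_mul_mod_self_left, Nat.mod_eq_of_lt hbM, Nat.mod_eq_of_lt hb'M]
      using congrArg (· % M) heq
  subst hbb'
  simp [Nat.eq_of_mul_eq_mul_left (by omega : 0 < M) (by omega : M * c = M * c')]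

omit hB in
lemma div_add_div_modEq {N a₁ a₂ a₁' a₂' : ℕ} (hM : M ≠ 0) (h₁ : a₁ % M = a₁' % M)
    (h₂ : a₂ % M = a₂' % M) (h : a₁ + a₂ ≡ a₁' + a₂' [MOD M * N]) :
    a₁ / M + a₂ / M ≡ a₁' / M + a₂' / M [MOD N] := by
  refine Nat.ModEq.mul_left_cancel' hM (Nat.ModEq.add_left_cancel' (a₁ % M + a₂ % M) ?_)
  have e₁ := Nat.mod_add_div a₁ M
  have e₂ := Nat.mod_add_div a₂ M
  have e₁' := Nat.mod_add_div a₁' M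
  have e₂' := Nat.mod_add_div a₂' M
  convert h using 1 <;> linarith

lemma card_pairs_with_residues_le {N : ℕ} {y : ℝ} (hCy : ∀ s, (reprCount N C s : ℝ) ≤ y)
    (r : ℕ) (t : ℕ × ℕ) :
    (#{q ∈ addScaled B M C ×ˢ addScaled B M C |
      q.1 + q.2 ≡ r [MOD M * N] ∧ (q.1 % M, q.2 % M) = t} : ℝ) ≤ y := by
  set F := {q ∈ addScaled B M C ×ˢ addScaled B M C |
    q.1 + q.2 ≡ r [MOD M * N] ∧ (q.1 % M, q.2 % M) = t}
  have hmem {q} (hq : q ∈ F) := (mem_filter.1 hq).imp_left mem_product.1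
  obtain hempty | ⟨q₀, hq₀⟩ := F.eq_empty_or_nonempty
  · simpa [hempty] using (Nat.cast_nonneg _).trans (hCy 0)
  obtain ⟨⟨hq₀₁, -⟩, hq₀r, hq₀t⟩ := hmem hq₀
  have hM : M ≠ 0 := by
    have := hB _ (mod_mem_and_div_mem_of_mem_addScaled hB hq₀₁).1
    omega
  refine le_trans ?_ (hCy (q₀.1 / M + q₀.2 / M))
  refine Nat.cast_le.2 (card_le_card_of_injOn (fun q => (q.1 / M, q.2 / M)) ?_ ?_)
  · intro q hq
    obtain ⟨⟨h₁, h₂⟩, hqr, hqt⟩ := hmem hq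
    simp only [coe_filter, Set.mem_ofPred_eq, mem_product]
    refine ⟨⟨(mod_mem_and_div_mem_of_mem_addScaled hB h₁).2,
      (mod_mem_and_div_mem_of_mem_addScaled hB h₂).2⟩, div_add_div_modEq hM ?_ ?_
      (hqr.trans hq₀r.symm)⟩
    · exact congrArg Prod.fst (hqt.trans hq₀t.symm)
    · exact congrArg Prod.snd (hqt.trans hq₀t.symm)
  · intro q hq q' hq' hdiv
    have hres := (hmem hq).2.2.trans (hmem hq').2.2.symm
    simp only [Prod.mk.injEq] at hdiv hres
    ext
    · rw [← Nat.mod_add_div q.1 M, ← Nat.mod_add_div q'.1 M, hres.1, hdiv.1]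
    · rw [← Nat.mod_add_div q.2 M, ← Nat.mod_add_div q'.2 M, hres.2, hdiv.2]

lemma reprCount_addScaled_le {N : ℕ} {x y : ℝ} (hBx : ∀ r, (reprCount M B r : ℝ) ≤ x)
    (hCy : ∀ s, (reprCount N C s : ℝ) ≤ y) (r : ℕ) :
    (reprCount (M * N) (addScaled B M C) r : ℝ) ≤ x * y := by
  set S := {q ∈ addScaled B M C ×ˢ addScaled B M C | q.1 + q.2 ≡ r [MOD M * N]}
  have hmaps : ∀ q ∈ S, (q.1 % M, q.2 % M) ∈ {t ∈ B ×ˢ B | t.1 + t.2 ≡ r [MOD M]} := by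
    intro q hq
    obtain ⟨h, hsum⟩ := mem_filter.1 hq
    obtain ⟨h₁, h₂⟩ := mem_product.1 h
    simp only [mem_filter, mem_product]
    exact ⟨⟨(mod_mem_and_div_mem_of_mem_addScaled hB h₁).1,
      (mod_mem_and_div_mem_of_mem_addScaled hB h₂).1⟩,
      ((Nat.mod_modEq _ _).add (Nat.mod_modEq _ _)).trans (hsum.of_mul_right N)⟩
  calc (reprCount (M * N) (addScaled B M C) r : ℝ)
      = ∑ t ∈ {t ∈ B ×ˢ B | t.1 + t.2 ≡ r [MOD M]},
          (#{q ∈ S | (q.1 % M, q.2 % M) = t} : ℝ) := by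
        rw [reprCount, card_eq_sum_card_fiberwise hmaps]
        push_cast; rfl
    _ ≤ reprCount M B r * y := by
        simp_rw [S, filter_filter]
        grw [sum_le_sum fun t _ => card_pairs_with_residues_le hB hCy r t, sum_const,
          nsmul_eq_mul, reprCount]
    _ ≤ x * y := mul_le_mul_of_nonneg_right (hBx r) ((Nat.cast_nonneg _).trans (hCy 0))

end addScaled

section quadraticChar

variable {F : Type*} [Field F] [Fintype F]

lemma ringChar_ne_two_of_card_mod_four_eq_three (hF : Fintype.card F % 4 = 3) :
    ringChar F ≠ 2 := fun h =>
  FiniteField.isSquare_neg_one_iff.1 (FiniteField.isSquare_of_char_two h _) hF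

variable [DecidableEq F]

local notation "χ" => quadraticChar F

lemma two_mul_card_quadraticChar_eq_one_add_one (hF : ringChar F ≠ 2) :
    2 * #{x : F | χ x = 1} + 1 = Fintype.card F := by
  have hterm (x : F) : 1 + χ x = 2 * (if χ x = 1 then 1 else 0) + (if x = 0 then 1 else 0) := by
    rcases eq_or_ne x 0 with rfl | hx
    · simp
    · rcases quadraticChar_dichotomy hx with h | h <;> simp [h, hx]
  have := sum_congr rfl fun x (_ : x ∈ univ) => hterm x
  simp only [sum_add_distrib, quadraticChar_sum_zero hF, ← mul_sum, sum_boole,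
    sum_const, card_univ, nsmul_eq_mul, mul_one, add_zero, filter_eq', mem_univ, if_true,
    card_singleton] at this
  exact_mod_cast this.symm

variable (hF : Fintype.card F % 4 = 3)
include hF

lemma quadraticChar_neg_one_of_card_mod_four_eq_three : χ (-1) = -1 :=
  quadraticChar_neg_one_iff_not_isSquare.2 fun h => FiniteField.isSquare_neg_one_iff.1 h hF

lemma sum_quadraticChar_mul_quadraticChar_sub_le_one (t : F) :
    ∑ x : F, χ x * χ (t - x) ≤ 1 := by
  have hneg := quadraticChar_neg_one_of_card_mod_four_eq_three hF
  rcases eq_or_ne t 0 with rfl | ht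
  · refine (sum_nonpos fun x _ => ?_).trans zero_le_one
    rw [zero_sub, neg_eq_neg_one_mul, map_mul, hneg]
    nlinarith [sq_nonneg (χ x)]
  · -- substituting `x = t * y` turns the sum into the Jacobi sum `J(χ, χ) = -χ(-1)`
    have hJ := jacobiSum_nontrivial_inv
      (quadraticChar_ne_one (ringChar_ne_two_of_card_mod_four_eq_three hF))
    rw [(quadraticChar_isQuadratic F).inv, hneg, jacobiSum] at hJ
    rw [← (mulLeft_bijective₀ t ht).sum_comp]
    simp only [← mul_one_sub, map_mul]
    calc ∑ y : F, χ t * χ y * (χ t * χ (1 - y))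
        = (χ t) ^ 2 * ∑ y : F, χ y * χ (1 - y) := by rw [mul_sum]; congr 1; ext; ring
      _ ≤ 1 := by rw [quadraticChar_sq_one ht, hJ]; simp

lemma four_mul_card_quadraticChar_eq_one_le (t : F) :
    4 * #{x : F | χ x = 1 ∧ χ (t - x) = 1} ≤ Fintype.card F + 1 := by
  have hpos (x : F) : (0 : ℤ) ≤ 1 + χ x := by
    rcases eq_or_ne x 0 with rfl | hx
    · simp
    · rcases quadraticChar_dichotomy hx with h | h <;> simp [h]
  have hexpand : ∑ x : F, (1 + χ x) * (1 + χ (t - x)) =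
      Fintype.card F + ∑ x, χ x * χ (t - x) := by
    have hF2 := ringChar_ne_two_of_card_mod_four_eq_three hF
    simp only [add_mul, one_mul, mul_add, mul_one, sum_add_distrib, quadraticChar_sum_zero hF2,
      sum_const, card_univ, nsmul_eq_mul, mul_one]
    rw [← (Equiv.subLeft t).sum_comp]
    simpa using quadraticChar_sum_zero hF2
  have : (4 * #{x : F | χ x = 1 ∧ χ (t - x) = 1} : ℤ) ≤ Fintype.card F + 1 :=
    calc (4 * #{x : F | χ x = 1 ∧ χ (t - x) = 1} : ℤ)
        = ∑ x ∈ {x : F | χ x = 1 ∧ χ (t - x) = 1}, (1 + χ x) * (1 + χ (t - x)) := by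
          rw [sum_congr rfl fun x hx => by rw [(mem_filter.1 hx).2.1, (mem_filter.1 hx).2.2]]
          simp [mul_comm]
      _ ≤ ∑ x : F, (1 + χ x) * (1 + χ (t - x)) :=
          sum_le_sum_of_subset_of_nonneg (subset_univ _)
            fun x _ _ => mul_nonneg (hpos x) (hpos (t - x))
      _ ≤ Fintype.card F + 1 := by
          rw [hexpand]; linarith [sum_quadraticChar_mul_quadraticChar_sub_le_one hF t]
  exact_mod_cast this

end quadraticChar

/-- All representation counts of `B` modulo `M` are at most `E` times their average `#B ^ 2 / M`. -/
def IsFlat (E : ℝ) (M : ℕ) (B : Finset ℕ) : Prop :=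
  (∀ b ∈ B, b < M) ∧ ∀ r, (reprCount M B r : ℝ) * M ≤ E * #B ^ 2

lemma isFlat_singleton_zero {E : ℝ} (hE : 1 ≤ E) : IsFlat E 1 {0} := by
  refine ⟨by simp, fun r => ?_⟩
  have := reprCount_le_card_sq 1 {0} r
  simp only [card_singleton, one_pow, Nat.cast_one, mul_one] at this ⊢
  exact (Nat.cast_le_one.2 this).trans hE

lemma IsFlat.addScaled {E E' : ℝ} {M N : ℕ} {B C : Finset ℕ} (hB : IsFlat E M B)
    (hC : IsFlat E' N C) (hM : 0 < M) (hN : 0 < N) :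
    IsFlat (E * E') (M * N) (_root_.addScaled B M C) := by
  refine ⟨fun a ha => lt_of_mem_addScaled hB.1 hC.1 ha, fun r => ?_⟩
  have hMR : (0 : ℝ) < M := Nat.cast_pos.2 hM
  have hNR : (0 : ℝ) < N := Nat.cast_pos.2 hN
  have := reprCount_addScaled_le hB.1 (fun r => (le_div_iff₀ hMR).2 (hB.2 r))
    (fun s => (le_div_iff₀ hNR).2 (hC.2 s)) r
  rw [card_addScaled hB.1]
  calc (reprCount (M * N) (_root_.addScaled B M C) r : ℝ) * ↑(M * N)
      ≤ E * #B ^ 2 / M * (E' * #C ^ 2 / N) * (M * N) := by push_cast; gcongr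
    _ = E * E' * ↑(#B * #C) ^ 2 := by field_simp; push_cast; ring

def quadResidues (p : ℕ) [Fact p.Prime] : Finset ℕ :=
  {a ∈ range p | quadraticChar (ZMod p) a = 1}

section quadResidues

variable (p : ℕ) [Fact p.Prime]

lemma card_quadResidues : #(quadResidues p) = #{x : ZMod p | quadraticChar (ZMod p) x = 1} := by
  refine card_nbij' (fun a => (a : ZMod p)) ZMod.val ?_ ?_ ?_ ?_
  · intro a ha
    simpa using (mem_filter.1 ha).2
  · intro x hx
    simpa [quadResidues, ZMod.val_lt] using (mem_filter.1 hx).2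
  · intro a ha
    exact ZMod.val_cast_of_lt (mem_range.1 (mem_filter.1 ha).1)
  · intro x _
    exact ZMod.natCast_zmod_val x

lemma two_mul_card_quadResidues_add_one (hp : p ≠ 2) : 2 * #(quadResidues p) + 1 = p := by
  rw [card_quadResidues, two_mul_card_quadraticChar_eq_one_add_one (by rwa [ZMod.ringChar_zmod_n]),
    ZMod.card]

lemma reprCount_quadResidues_le (r : ℕ) :
    reprCount p (quadResidues p) r ≤
      #{x : ZMod p | quadraticChar (ZMod p) x = 1 ∧ quadraticChar (ZMod p) (r - x) = 1} := by
  refine card_le_card_of_injOn (fun q => (q.1 : ZMod p)) ?_ ?_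
  · rintro ⟨a, b⟩ hq
    simp only [quadResidues, coe_filter, mem_product, mem_filter, mem_range] at hq
    obtain ⟨⟨⟨-, ha⟩, -, hb⟩, hab⟩ := hq
    have : (r : ZMod p) - a = b := by
      rw [sub_eq_iff_eq_add', ← Nat.cast_add, (ZMod.natCast_eq_natCast_iff _ _ _).2 hab]
    simp only [coe_filter, mem_univ, true_and, Set.mem_ofPred_eq, this]
    exact ⟨ha, hb⟩
  · rintro ⟨a, b⟩ hq ⟨a', b'⟩ hq' (haa' : (a : ZMod p) = a')
    simp only [quadResidues, coe_filter, mem_product, mem_filter, mem_range] at hq hq'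
    have ha : a = a' := by
      simpa [ZMod.val_cast_of_lt hq.1.1.1, ZMod.val_cast_of_lt hq'.1.1.1] using
        congrArg ZMod.val haa'
    subst ha
    have hbb' : b ≡ b' [MOD p] := Nat.ModEq.add_left_cancel' a (hq.2.trans hq'.2.symm)
    simp [Nat.ModEq.eq_of_lt_of_lt hbb' hq.1.2.1 hq'.1.2.1]

lemma isFlat_quadResidues (hp : p % 4 = 3) (hp7 : 7 ≤ p) :
    IsFlat (1 + 4 / p) p (quadResidues p) := by
  refine ⟨fun a ha => mem_range.1 (mem_filter.1 ha).1, fun r => ?_⟩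
  have h4 : (4 * reprCount p (quadResidues p) r : ℝ) ≤ p + 1 := by
    have := (Nat.mul_le_mul_left 4 (reprCount_quadResidues_le p r)).trans
      (four_mul_card_quadraticChar_eq_one_le (F := ZMod p) (by simpa using hp) r)
    exact_mod_cast (ZMod.card p ▸ this)
  have hcard : (#(quadResidues p) : ℝ) = (p - 1) / 2 := by
    have := two_mul_card_quadResidues_add_one p (by omega)
    have : (2 * #(quadResidues p) + 1 : ℝ) = p := by exact_mod_cast this
    linarith
  have hp7R : (7 : ℝ) ≤ p := by exact_mod_cast hp7
  rw [show (1 + 4 / p : ℝ) * #(quadResidues p) ^ 2 = (p + 4) * #(quadResidues p) ^ 2 / p by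
    field_simp, le_div_iff₀ (by positivity), hcard]
  nlinarith [mul_le_mul_of_nonneg_right h4 (sq_nonneg (p : ℝ)),
    mul_nonneg (by positivity : (0 : ℝ) ≤ p) (sub_nonneg.2 hp7R)]

end quadResidues

lemma IsFlat.mono {E E' : ℝ} {M : ℕ} {B : Finset ℕ} (hB : IsFlat E M B) (hEE' : E ≤ E') :
    IsFlat E' M B :=
  ⟨hB.1, fun r => (hB.2 r).trans (by gcongr)⟩

lemma exists_prime_mod_four_eq_three_one_add_four_div_le {E : ℝ} (hE : 1 < E) :
    ∃ p : ℕ, p.Prime ∧ p % 4 = 3 ∧ 7 ≤ p ∧ 1 + 4 / (p : ℝ) ≤ E := by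
  obtain ⟨p, hpgt, hp, hp4⟩ :=
    Nat.forall_exists_prime_gt_and_eq_mod (q := 4) (a := 3) (by decide) (max 7 ⌈4 / (E - 1)⌉₊)
  have hpE : 4 / (E - 1) ≤ p :=
    (Nat.le_ceil _).trans (by exact_mod_cast (le_max_right _ _).trans hpgt.le)
  refine ⟨p, hp, ?_, (le_max_left _ _).trans hpgt.le, ?_⟩
  · exact (ZMod.natCast_eq_natCast_iff' p 3 4).1 hp4
  · have hpR : (0 : ℝ) < p := by exact_mod_cast hp.pos
    rw [div_le_iff₀ (by linarith)] at hpE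
    rw [← le_sub_iff_add_le', div_le_iff₀ hpR]
    linarith

lemma exists_sparse_isFlat (n : ℕ) {E : ℝ} (hE : 1 < E) :
    ∃ M : ℕ, ∃ B : Finset ℕ, B.Nonempty ∧ 2 ^ n * #B ≤ M ∧ IsFlat E M B := by
  induction n generalizing E with
  | zero => exact ⟨1, {0}, singleton_nonempty 0, by simp, isFlat_singleton_zero hE.le⟩
  | succ n ih =>
    have hsqrt : 1 < √E := by rw [Real.lt_sqrt zero_le_one]; simpa using hE
    obtain ⟨M, B, ⟨b, hb⟩, hBM, hB⟩ := ih hsqrt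
    obtain ⟨p, hp, hp4, hp7, hpE⟩ := exists_prime_mod_four_eq_three_one_add_four_div_le hsqrt
    have := Fact.mk hp
    have hQ := two_mul_card_quadResidues_add_one p (by omega)
    have hM : 0 < M := (Nat.zero_le b).trans_lt (hB.1 b hb)
    refine ⟨M * p, addScaled B M (quadResidues p), ?_, ?_, ?_⟩
    · refine card_pos.1 ?_
      rw [card_addScaled hB.1]
      exact Nat.mul_pos (card_pos.2 ⟨b, hb⟩) (by omega)
    · rw [card_addScaled hB.1, pow_succ]
      calc 2 ^ n * 2 * (#B * #(quadResidues p)) = 2 ^ n * #B * (2 * #(quadResidues p)) := by ring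
        _ ≤ M * p := Nat.mul_le_mul hBM (by omega)
    · refine (hB.addScaled (isFlat_quadResidues p hp4 hp7) hM hp.pos).mono ?_
      calc √E * (1 + 4 / p) ≤ √E * √E := by gcongr
        _ = E := Real.mul_self_sqrt (by linarith)

section amplify

variable {B D : Finset ℕ} {M : ℕ}

lemma maxCoeff_sq_newmanPoly_addScaled_le {E : ℝ} (hB : IsFlat E M B) (hM : 0 < M) :
    maxCoeff (newmanPoly (addScaled B M D) ^ 2) ≤
      E * #B ^ 2 / M * maxCoeff (newmanPoly D ^ 2) := by
  refine ciSup_le fun k => ?_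
  have := reprCount_addScaled_le hB.1 (N := 0)
    (fun r => (le_div_iff₀ (Nat.cast_pos.2 hM)).2 (hB.2 r))
    (fun s => (coeff_newmanPoly_sq D s).symm.trans_le (coeff_le_maxCoeff _ s)) k
  rwa [mul_zero, ← coeff_newmanPoly_sq] at this

variable (hBne : B.Nonempty) (hD : D.Nonempty)
include hBne

lemma mul_max'_le_natDegree_newmanPoly_addScaled :
    M * D.max' hD ≤ (newmanPoly (addScaled B M D)).natDegree := by
  obtain ⟨b, hb⟩ := hBne
  have hmem : b + M * D.max' hD ∈ addScaled B M D :=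
    mem_addScaled.2 ⟨b, hb, _, D.max'_mem hD, rfl⟩
  rw [natDegree_newmanPoly ⟨_, hmem⟩]
  exact (Nat.le_add_left _ b).trans (le_max' _ _ hmem)

lemma natDegree_newmanPoly_addScaled_lt (hB : ∀ b ∈ B, b < M) :
    (newmanPoly (addScaled B M D)).natDegree < M * (D.max' hD + 1) := by
  obtain ⟨b, hb⟩ := hBne
  have hne : (addScaled B M D).Nonempty :=
    ⟨_, mem_addScaled.2 ⟨b, hb, _, D.max'_mem hD, rfl⟩⟩
  rw [natDegree_newmanPoly hne]
  exact lt_of_mem_addScaled hB (fun c hc => Nat.lt_succ_of_le (le_max' D c hc)) (max'_mem _ hne)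

end amplify

lemma exists_sparse_newman {f : ℝ[X]} (hf : IsNewman f) (hd : 0 < f.natDegree) {E : ℝ}
    (hE : 1 < E) (n : ℕ) :
    ∃ q : ℝ[X], IsNewman q ∧ 2 ^ n ≤ q.natDegree ∧
      coeffSum q / q.natDegree ≤ (1 / 2) ^ n * (coeffSum f / f.natDegree) ∧
      q.natDegree * Rquot q ≤ E * (f.natDegree + 1) * Rquot f := by
  obtain ⟨D, rfl⟩ : ∃ D, f = newmanPoly D := ⟨_, hf.eq_newmanPoly_support⟩
  have hD : D.Nonempty := nonempty_iff_ne_empty.2 fun h => by simp [h, newmanPoly] at hd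
  obtain ⟨M, B, hBne, hBM, hB⟩ := exists_sparse_isFlat n hE
  have hM : 0 < M := (Nat.zero_le _).trans_lt (hB.1 _ hBne.choose_spec)
  have hlo := mul_max'_le_natDegree_newmanPoly_addScaled (M := M) hBne hD
  have hhi := natDegree_newmanPoly_addScaled_lt hBne hD hB.1
  rw [natDegree_newmanPoly hD] at hd ⊢
  set d := D.max' hD
  set q := newmanPoly (addScaled B M D)
  have hdensity : (#B : ℝ) / M ≤ (1 / 2) ^ n :=
    calc (#B : ℝ) / M ≤ #B / (2 ^ n * #B) := by gcongr; exact_mod_cast hBM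
      _ = (1 / 2) ^ n := by field_simp; rw [← mul_pow]; norm_num
  have hsum : coeffSum q = #B * #D := by
    rw [coeffSum_newmanPoly, card_addScaled hB.1, Nat.cast_mul]
  refine ⟨q, isNewman_newmanPoly _, ?_, ?_, ?_⟩
  · calc 2 ^ n ≤ 2 ^ n * #B := Nat.le_mul_of_pos_right _ (card_pos.2 hBne)
      _ ≤ M * d := hBM.trans (Nat.le_mul_of_pos_right _ hd)
      _ ≤ q.natDegree := hlo
  · rw [hsum, coeffSum_newmanPoly]
    calc (#B * #D : ℝ) / q.natDegree ≤ #B * #D / (M * d) := by gcongr; exact_mod_cast hlo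
      _ = #B / M * (#D / d) := by field_simp
      _ ≤ (1 / 2) ^ n * (#D / d) := by gcongr
  · have hq : (q.natDegree : ℝ) ≤ M * (d + 1) := by exact_mod_cast hhi.le
    rw [Rquot, Rquot, hsum, coeffSum_newmanPoly]
    calc q.natDegree * (maxCoeff (q ^ 2) / (#B * #D) ^ 2)
        ≤ M * (d + 1) * (E * #B ^ 2 / M * maxCoeff (newmanPoly D ^ 2) / (#B * #D) ^ 2) := by
          gcongr
          · exact div_nonneg (maxCoeff_nonneg _) (by positivity)
          · exact maxCoeff_sq_newmanPoly_addScaled_le hB hM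
      _ = E * (d + 1) * (maxCoeff (newmanPoly D ^ 2) / #D ^ 2) := by field_simp

lemma eventually_add_one_le_mul {E : ℝ} (hE : 1 < E) :
    ∀ᶠ d : ℕ in atTop, (d + 1 : ℝ) ≤ E * d := by
  filter_upwards [eventually_ge_atTop ⌈1 / (E - 1)⌉₊] with d hd
  have := (Nat.le_ceil _).trans (Nat.cast_le.2 hd)
  rw [div_le_iff₀ (by linarith)] at this
  linarith

theorem stmt12_general (p : ℕ → Polynomial ℝ) (hNew : ∀ n, IsNewman (p n))
    (hdeg : Tendsto (fun n => (p n).natDegree) atTop atTop)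
    (ρ : ℝ) (hρ : 0 < ρ)
    (hR : ∀ n, Rquot (p n) ≤ ρ / (p n).natDegree) :
    ∀ ρ' : ℝ, ρ < ρ' →
      ∃ q : ℕ → Polynomial ℝ, (∀ n, IsNewman (q n)) ∧
        Tendsto (fun n => (q n).natDegree) atTop atTop ∧
        Tendsto (fun n => coeffSum (q n) / (q n).natDegree) atTop (nhds 0) ∧
        ∀ n, Rquot (q n) ≤ ρ' / (q n).natDegree := by
  intro ρ' hρρ'
  obtain ⟨E, hE, hEE⟩ : ∃ E, 1 < E ∧ E * E * ρ = ρ' :=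
    ⟨√(ρ' / ρ), by rw [Real.lt_sqrt zero_le_one, one_pow, one_lt_div hρ]; exact hρρ', by
      rw [Real.mul_self_sqrt (div_pos (hρ.trans hρρ') hρ).le, div_mul_cancel₀ _ hρ.ne']⟩
  obtain ⟨m, hd, hdE⟩ :=
    (hdeg.eventually ((eventually_gt_atTop 0).and (eventually_add_one_le_mul hE))).exists
  set d := (p m).natDegree
  choose q hqN hqdeg hqsparse hqR using exists_sparse_newman (hNew m) hd hE
  refine ⟨q, hqN, tendsto_atTop_mono hqdeg (tendsto_pow_atTop_atTop_of_one_lt one_lt_two), ?_,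
    fun n => ?_⟩
  · refine squeeze_zero (fun n => div_nonneg (hqN n).coeffSum_nonneg (Nat.cast_nonneg _))
      hqsparse ?_
    simpa using (tendsto_pow_atTop_nhds_zero_of_lt_one (r := (1 / 2 : ℝ)) (by norm_num)
      (by norm_num)).mul_const (coeffSum (p m) / d)
  · rw [le_div_iff₀ (Nat.cast_pos.2 (Nat.one_le_two_pow.trans (hqdeg n))), mul_comm]
    calc ((q n).natDegree : ℝ) * Rquot (q n) ≤ E * (d + 1) * Rquot (p m) := hqR n
      _ ≤ E * (d + 1) * (ρ / d) := by gcongr; exact hR m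
      _ ≤ E * (E * d) * (ρ / d) := by gcongr
      _ = ρ' := by rw [← hEE]; field_simp

/-- Main theorem: from a dense sequence of Newman polynomials with `R(p_n) ≤ ρ / deg p_n`,
one constructs, for every `ρ' > ρ`, a sparse sequence of Newman polynomials `q_n` with
`R(q_n) ≤ ρ' / deg q_n`. -/
theorem stmt12 (p : ℕ → Polynomial ℝ) (hNew : ∀ n, IsNewman (p n))
    (hdeg : Tendsto (fun n => (p n).natDegree) atTop atTop)
    (c₀ ρ : ℝ) (hc₀ : 0 < c₀) (hρ : 0 < ρ)
    (hdense : ∀ n, c₀ * (p n).natDegree ≤ coeffSum (p n))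
    (hR : ∀ n, Rquot (p n) ≤ ρ / (p n).natDegree) :
    ∀ ρ' : ℝ, ρ < ρ' →
      ∃ q : ℕ → Polynomial ℝ, (∀ n, IsNewman (q n)) ∧
        Tendsto (fun n => (q n).natDegree) atTop atTop ∧
        Tendsto (fun n => coeffSum (q n) / (q n).natDegree) atTop (nhds 0) ∧
        ∀ n, Rquot (q n) ≤ ρ' / (q n).natDegree :=
  stmt12_general p hNew hdeg ρ hρ hR
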